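/- arXiv:math/0410235 — 6 statements merged into one kernel-verified Lean document; each statement's English description precedes it below -/
import Mathlib

section
/- For every real λ > 0, ∫₀¹ 1/((1-t) + tλ) · dt/(π√(t(1-t))) = λ^{-1/2}. -/
/-!
The Möbius map `φ t = l t / ((1 - t) + t l)` fixes `0` and `1`, and the chain rule shows that it
pulls the arcsine density `ρ u = 1 / (π √(u (1 - u)))` back to `√l / ((1 - t) + t l) · ρ t`.
Since `(2 / π) arcsin √u` is a primitive of `ρ`, the function `(2 / (π √l)) arcsin √(φ t)` is a
primitive of the integrand; it is continuous on `[0, 1]` and increases by `1 / √l` across it, and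
a nonnegative derivative is automatically integrable.
-/

open Real Set intervalIntegral

theorem integral_eq_sub_of_hasDerivAt_of_nonneg {f f' : ℝ → ℝ} {a b : ℝ} (hab : a ≤ b)
    (hcont : ContinuousOn f (Icc a b)) (hderiv : ∀ x ∈ Ioo a b, HasDerivAt f (f' x) x)
    (hpos : ∀ x ∈ Ioo a b, 0 ≤ f' x) : ∫ x in a..b, f' x = f b - f a :=
  integral_eq_sub_of_hasDerivAt_of_le hab hcont hderiv <|
    intervalIntegrable_deriv_of_nonneg (by rwa [uIcc_of_le hab])
      (by rwa [min_eq_left hab, max_eq_right hab]) (by rwa [min_eq_left hab, max_eq_right hab])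

theorem hasDerivAt_arcsin_sqrt {u : ℝ} (hu : u ∈ Ioo 0 1) :
    HasDerivAt (fun y => arcsin √y) (1 / (2 * √(u * (1 - u)))) u := by
  obtain ⟨hu0, hu1⟩ := hu
  have hsqrt_ne_one : √u ≠ 1 := fun h => hu1.ne (sqrt_eq_one.1 h)
  have h := (hasDerivAt_arcsin (by linarith [sqrt_nonneg u]) hsqrt_ne_one).comp u
    (hasDerivAt_sqrt hu0.ne')
  refine h.congr_deriv ?_
  rw [sq_sqrt hu0.le, sqrt_mul hu0.le]
  field_simp

noncomputable def resolventRatio (l t : ℝ) : ℝ := l * t / (1 - t + t * l)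

theorem resolventRatio_zero (l : ℝ) : resolventRatio l 0 = 0 := by
  simp [resolventRatio]

theorem resolventRatio_one {l : ℝ} (hl : l ≠ 0) : resolventRatio l 1 = 1 := by
  simp [resolventRatio, hl]

theorem resolvent_denom_pos {l t : ℝ} (hl : 0 < l) (ht : t ∈ Icc 0 1) : 0 < 1 - t + t * l := by
  obtain ⟨ht0, ht1⟩ := ht
  nlinarith [mul_nonneg ht0 hl.le]

theorem hasDerivAt_resolventRatio {l x : ℝ} (hx : 1 - x + x * l ≠ 0) :
    HasDerivAt (resolventRatio l) (l / (1 - x + x * l) ^ 2) x := by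
  have hdenom : HasDerivAt (fun t => 1 - t + t * l) (l - 1) x :=
    (((hasDerivAt_id' x).const_sub 1).add ((hasDerivAt_id' x).mul_const l)).congr_deriv (by ring)
  refine (((hasDerivAt_id' x).const_mul l).div hdenom hx).congr_deriv ?_
  field_simp
  ring

theorem resolventRatio_mem_Ioo {l x : ℝ} (hl : 0 < l) (hx : x ∈ Ioo 0 1) :
    resolventRatio l x ∈ Ioo 0 1 := by
  have hD := resolvent_denom_pos hl (Ioo_subset_Icc_self hx)
  obtain ⟨hx0, hx1⟩ := hx
  constructor
  · unfold resolventRatio; positivity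
  · rw [resolventRatio, div_lt_one hD]; linarith

theorem resolventRatio_mul_one_sub {l x : ℝ} (hx : 1 - x + x * l ≠ 0) :
    resolventRatio l x * (1 - resolventRatio l x) = l * (x * (1 - x)) / (1 - x + x * l) ^ 2 := by
  rw [resolventRatio, one_sub_div hx, div_mul_div_comm, sq]
  ring

theorem hasDerivAt_arcsin_sqrt_resolventRatio {l x : ℝ} (hl : 0 < l) (hx : x ∈ Ioo 0 1) :
    HasDerivAt (fun t => arcsin √(resolventRatio l t))
      (√l / (2 * (1 - x + x * l) * √(x * (1 - x)))) x := by
  have hD := resolvent_denom_pos hl (Ioo_subset_Icc_self hx)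
  have h := (hasDerivAt_arcsin_sqrt (resolventRatio_mem_Ioo hl hx)).comp x
    (hasDerivAt_resolventRatio hD.ne')
  refine h.congr_deriv ?_
  rw [resolventRatio_mul_one_sub hD.ne', sqrt_div' _ (sq_nonneg _), sqrt_sq hD.le,
    sqrt_mul hl.le]
  have hsl := sqrt_pos.2 hl
  field_simp
  rw [sq_sqrt hl.le]

theorem continuousOn_arcsin_sqrt_resolventRatio {l : ℝ} (hl : 0 < l) :
    ContinuousOn (fun t => arcsin √(resolventRatio l t)) (Icc 0 1) := by
  refine continuous_arcsin.comp_continuousOn (continuous_sqrt.comp_continuousOn ?_)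
  exact (continuousOn_const.mul continuousOn_id).div (by fun_prop)
    fun t ht => (resolvent_denom_pos hl ht).ne'

theorem arcsine_resolvent (l : ℝ) (hl : 0 < l) :
    ∫ t in (0:ℝ)..1,
        (1 / ((1 - t) + t * l)) * (1 / (Real.pi * Real.sqrt (t * (1 - t)))) =
      l ^ (-(1/2) : ℝ) := by
  set F : ℝ → ℝ := fun t => 2 / (π * √l) * arcsin √(resolventRatio l t)
  have hcont : ContinuousOn F (Icc 0 1) :=
    continuousOn_const.mul (continuousOn_arcsin_sqrt_resolventRatio hl)
  have hderiv : ∀ x ∈ Ioo (0 : ℝ) 1,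
      HasDerivAt F ((1 / ((1 - x) + x * l)) * (1 / (π * √(x * (1 - x))))) x := fun x hx => by
    refine ((hasDerivAt_arcsin_sqrt_resolventRatio hl hx).const_mul _).congr_deriv ?_
    have hsl := sqrt_pos.2 hl
    have hsx := sqrt_pos.2 (mul_pos hx.1 (sub_pos.2 hx.2))
    have hD := resolvent_denom_pos hl (Ioo_subset_Icc_self hx)
    field_simp
  have hpos : ∀ x ∈ Ioo (0 : ℝ) 1, 0 ≤ (1 / ((1 - x) + x * l)) * (1 / (π * √(x * (1 - x)))) :=
    fun x hx => by
      have hD := resolvent_denom_pos hl (Ioo_subset_Icc_self hx)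
      positivity
  rw [integral_eq_sub_of_hasDerivAt_of_nonneg zero_le_one hcont hderiv hpos, rpow_neg hl.le,
    ← sqrt_eq_rpow]
  have hsl := sqrt_pos.2 hl
  simp only [F, resolventRatio_one hl.ne', resolventRatio_zero, sqrt_one, sqrt_zero, arcsin_one,
    arcsin_zero, mul_zero, sub_zero]
  field_simp
end

section
/- Let ν be a σ-finite measure and g, h : Ω → (0,∞) measurable. For a measurable function k, the infimum over all measurable decompositions k = f₁ + f₂ of ( ∫ |f₁|² g dν + ∫ |f₂|² h dν )^{1/2} equals ( ∫ |k|²/(g⁻¹ + h⁻¹) dν )^{1/2}. -/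
/-!
Pointwise, `‖u + v‖² / (G⁻¹ + H⁻¹) ≤ ‖u‖² G + ‖v‖² H` for `G, H > 0`, by the triangle
inequality and Cauchy–Schwarz applied to `(‖u‖ √G, ‖v‖ √H)` and `(1/√G, 1/√H)`. Integrating gives
the lower bound for every decomposition `k = f₁ + f₂`, and equality holds pointwise for the
splitting `f₁ = h / (g + h) • k`, `f₂ = g / (g + h) • k`, which is therefore optimal. When the
right-hand integrand is not integrable, no admissible decomposition exists, and both sides are `0`
by the conventions `sInf ∅ = 0` and `∫ f = 0` for non-integrable `f`.
-/

open MeasureTheory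

section Pointwise

variable {G H : ℝ}

lemma sq_add_div_inv_add_inv_le (hG : 0 < G) (hH : 0 < H) (a b : ℝ) :
    (a + b) ^ 2 / (G⁻¹ + H⁻¹) ≤ a ^ 2 * G + b ^ 2 * H := by
  have hinv : G⁻¹ + H⁻¹ = (G + H) / (G * H) := by field_simp; ring
  rw [hinv, div_div_eq_mul_div, div_le_iff₀ (by positivity)]
  nlinarith [sq_nonneg (a * G - b * H)]

lemma norm_add_sq_div_inv_add_inv_le {E : Type*} [SeminormedAddCommGroup E]
    (hG : 0 < G) (hH : 0 < H) (u v : E) :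
    ‖u + v‖ ^ 2 / (G⁻¹ + H⁻¹) ≤ ‖u‖ ^ 2 * G + ‖v‖ ^ 2 * H :=
  calc ‖u + v‖ ^ 2 / (G⁻¹ + H⁻¹) ≤ (‖u‖ + ‖v‖) ^ 2 / (G⁻¹ + H⁻¹) := by
        gcongr
        exact norm_add_le u v
    _ ≤ ‖u‖ ^ 2 * G + ‖v‖ ^ 2 * H := sq_add_div_inv_add_inv_le hG hH _ _

variable {E : Type*} [SeminormedAddCommGroup E] [NormedSpace ℝ E]

lemma div_add_smul_add_div_add_smul (hG : 0 < G) (hH : 0 < H) (w : E) :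
    (H / (G + H)) • w + (G / (G + H)) • w = w := by
  rw [← add_smul, ← add_div, add_comm H, div_self (by positivity), one_smul]

lemma norm_div_add_smul_sq_add_norm_div_add_smul_sq (hG : 0 < G) (hH : 0 < H) (w : E) :
    ‖(H / (G + H)) • w‖ ^ 2 * G + ‖(G / (G + H)) • w‖ ^ 2 * H = ‖w‖ ^ 2 / (G⁻¹ + H⁻¹) := by
  rw [norm_smul, norm_smul, Real.norm_of_nonneg (by positivity),
    Real.norm_of_nonneg (by positivity)]
  field_simp
  ring

end Pointwise

section Decomposition

variable {Ω E : Type*} [MeasurableSpace Ω] {ν : Measure Ω} {g h : Ω → ℝ}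
  [NormedAddCommGroup E] [MeasurableSpace E] [BorelSpace E] {k f₁ f₂ : Ω → E}

lemma integrable_norm_sq_div_inv_add_inv_of_eq_add (hk : Measurable k) (hg : Measurable g)
    (hh : Measurable h) (hgpos : ∀ x, 0 < g x) (hhpos : ∀ x, 0 < h x)
    (hi₁ : Integrable (fun x => ‖f₁ x‖ ^ 2 * g x) ν)
    (hi₂ : Integrable (fun x => ‖f₂ x‖ ^ 2 * h x) ν) (hdec : k = f₁ + f₂) :
    Integrable (fun x => ‖k x‖ ^ 2 / ((g x)⁻¹ + (h x)⁻¹)) ν := by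
  refine (hi₁.add hi₂).mono' ((hk.norm.pow_const 2).div (hg.inv.add hh.inv)).aestronglyMeasurable
    (Filter.Eventually.of_forall fun x => ?_)
  have hpos : 0 < (g x)⁻¹ + (h x)⁻¹ := by have := hgpos x; have := hhpos x; positivity
  rw [Real.norm_of_nonneg (by positivity), hdec]
  exact norm_add_sq_div_inv_add_inv_le (hgpos x) (hhpos x) _ _

omit [MeasurableSpace E] [BorelSpace E] in
lemma integral_norm_sq_div_inv_add_inv_le_of_eq_add (hgpos : ∀ x, 0 < g x)
    (hhpos : ∀ x, 0 < h x) (hk : Integrable (fun x => ‖k x‖ ^ 2 / ((g x)⁻¹ + (h x)⁻¹)) ν)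
    (hi₁ : Integrable (fun x => ‖f₁ x‖ ^ 2 * g x) ν)
    (hi₂ : Integrable (fun x => ‖f₂ x‖ ^ 2 * h x) ν) (hdec : k = f₁ + f₂) :
    ∫ x, ‖k x‖ ^ 2 / ((g x)⁻¹ + (h x)⁻¹) ∂ν ≤
      (∫ x, ‖f₁ x‖ ^ 2 * g x ∂ν) + ∫ x, ‖f₂ x‖ ^ 2 * h x ∂ν := by
  rw [← integral_add hi₁ hi₂]
  refine integral_mono hk (hi₁.add hi₂) fun x => ?_
  rw [hdec]
  exact norm_add_sq_div_inv_add_inv_le (hgpos x) (hhpos x) _ _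

lemma exists_eq_add_integral_eq [NormedSpace ℝ E] [SecondCountableTopology E]
    (hk : Measurable k) (hg : Measurable g) (hh : Measurable h)
    (hgpos : ∀ x, 0 < g x) (hhpos : ∀ x, 0 < h x)
    (hint : Integrable (fun x => ‖k x‖ ^ 2 / ((g x)⁻¹ + (h x)⁻¹)) ν) :
    ∃ f₁ f₂ : Ω → E, Measurable f₁ ∧ Measurable f₂ ∧
      Integrable (fun x => ‖f₁ x‖ ^ 2 * g x) ν ∧
      Integrable (fun x => ‖f₂ x‖ ^ 2 * h x) ν ∧ k = f₁ + f₂ ∧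
      (∫ x, ‖f₁ x‖ ^ 2 * g x ∂ν) + (∫ x, ‖f₂ x‖ ^ 2 * h x ∂ν) =
        ∫ x, ‖k x‖ ^ 2 / ((g x)⁻¹ + (h x)⁻¹) ∂ν := by
  set f₁ : Ω → E := fun x => (h x / (g x + h x)) • k x
  set f₂ : Ω → E := fun x => (g x / (g x + h x)) • k x
  have hm₁ : Measurable f₁ := (hh.div (hg.add hh)).smul hk
  have hm₂ : Measurable f₂ := (hg.div (hg.add hh)).smul hk
  have hsum : ∀ x, ‖f₁ x‖ ^ 2 * g x + ‖f₂ x‖ ^ 2 * h x = ‖k x‖ ^ 2 / ((g x)⁻¹ + (h x)⁻¹) :=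
    fun x => norm_div_add_smul_sq_add_norm_div_add_smul_sq (hgpos x) (hhpos x) (k x)
  have hi₁ : Integrable (fun x => ‖f₁ x‖ ^ 2 * g x) ν := by
    refine hint.mono' ((hm₁.norm.pow_const 2).mul hg).aestronglyMeasurable
      (Filter.Eventually.of_forall fun x => ?_)
    have := mul_nonneg (sq_nonneg ‖f₂ x‖) (hhpos x).le
    rw [Real.norm_of_nonneg (mul_nonneg (sq_nonneg _) (hgpos x).le), ← hsum]
    linarith
  have hi₂ : Integrable (fun x => ‖f₂ x‖ ^ 2 * h x) ν :=
    (hint.sub hi₁).congr (Filter.Eventually.of_forall fun x => by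
      rw [Pi.sub_apply, ← hsum x]; ring)
  refine ⟨f₁, f₂, hm₁, hm₂, hi₁, hi₂, ?_, ?_⟩
  · funext x
    exact (div_add_smul_add_div_add_smul (hgpos x) (hhpos x) (k x)).symm
  · rw [← integral_add hi₁ hi₂]
    exact integral_congr_ae (Filter.Eventually.of_forall hsum)

end Decomposition

theorem sum_space_norm_general {Ω : Type*} [MeasurableSpace Ω] (ν : Measure Ω)
    (g h : Ω → ℝ) (hg : Measurable g) (hh : Measurable h)
    (hgpos : ∀ x, 0 < g x) (hhpos : ∀ x, 0 < h x)
    (k : Ω → ℂ) (hk : Measurable k) :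
    sInf {v : ℝ | ∃ f₁ f₂ : Ω → ℂ, Measurable f₁ ∧ Measurable f₂ ∧
        Integrable (fun x => ‖f₁ x‖ ^ 2 * g x) ν ∧
        Integrable (fun x => ‖f₂ x‖ ^ 2 * h x) ν ∧
        k = f₁ + f₂ ∧
        v = Real.sqrt ((∫ x, ‖f₁ x‖ ^ 2 * g x ∂ν) +
              ∫ x, ‖f₂ x‖ ^ 2 * h x ∂ν)} =
      Real.sqrt (∫ x, ‖k x‖ ^ 2 / ((g x)⁻¹ + (h x)⁻¹) ∂ν) := by
  by_cases hint : Integrable (fun x => ‖k x‖ ^ 2 / ((g x)⁻¹ + (h x)⁻¹)) ν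
  · obtain ⟨f₁, f₂, hm₁, hm₂, hi₁, hi₂, hdec, hopt⟩ :=
      exists_eq_add_integral_eq hk hg hh hgpos hhpos hint
    refine IsLeast.csInf_eq ⟨⟨f₁, f₂, hm₁, hm₂, hi₁, hi₂, hdec, by rw [hopt]⟩, ?_⟩
    rintro v ⟨f₁', f₂', -, -, hi₁', hi₂', hdec', rfl⟩
    exact Real.sqrt_le_sqrt
      (integral_norm_sq_div_inv_add_inv_le_of_eq_add hgpos hhpos hint hi₁' hi₂' hdec')
  · rw [integral_undef hint, Real.sqrt_zero]
    convert Real.sInf_empty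
    refine Set.eq_empty_of_forall_notMem ?_
    rintro v ⟨f₁, f₂, -, -, hi₁, hi₂, hdec, -⟩
    exact hint (integrable_norm_sq_div_inv_add_inv_of_eq_add hk hg hh hgpos hhpos hi₁ hi₂ hdec)

theorem sum_space_norm {Ω : Type*} [MeasurableSpace Ω] (ν : Measure Ω) [SigmaFinite ν]
    (g h : Ω → ℝ) (hg : Measurable g) (hh : Measurable h)
    (hgpos : ∀ x, 0 < g x) (hhpos : ∀ x, 0 < h x)
    (k : Ω → ℂ) (hk : Measurable k) :
    sInf {v : ℝ | ∃ f₁ f₂ : Ω → ℂ, Measurable f₁ ∧ Measurable f₂ ∧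
        Integrable (fun x => ‖f₁ x‖ ^ 2 * g x) ν ∧
        Integrable (fun x => ‖f₂ x‖ ^ 2 * h x) ν ∧
        k = f₁ + f₂ ∧
        v = Real.sqrt ((∫ x, ‖f₁ x‖ ^ 2 * g x ∂ν) +
              ∫ x, ‖f₂ x‖ ^ 2 * h x ∂ν)} =
      Real.sqrt (∫ x, ‖k x‖ ^ 2 / ((g x)⁻¹ + (h x)⁻¹) ∂ν) :=
  sum_space_norm_general ν g h hg hh hgpos hhpos k hk
end

section
/- For every δ with 0 < δ < 1/2, ∫_δ^{1/2} ∫_δ^{1/2} min(1/t, 1/s) · (ts)^{-1/2} ds dt ≤ 4·ln(1/δ). -/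
open MeasureTheory

set_option maxHeartbeats 1000000

private lemma H_cont (δ : ℝ) (h0 : 0 < δ) :
    Continuous (Function.uncurry (fun t s : ℝ =>
      min ((max t δ) ^ (-(3/2) : ℝ) * (max s δ) ^ (-(1/2) : ℝ))
          ((max t δ) ^ (-(1/2) : ℝ) * (max s δ) ^ (-(3/2) : ℝ)))) := by
  have hT : Continuous fun p : ℝ × ℝ => max p.1 δ := (continuous_fst.max continuous_const)
  have hS : Continuous fun p : ℝ × ℝ => max p.2 δ := (continuous_snd.max continuous_const)
  have hTne : ∀ p : ℝ × ℝ, max p.1 δ ≠ 0 ∨ (0:ℝ) ≤ (-(3/2) : ℝ) := fun p =>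
    Or.inl (ne_of_gt (lt_of_lt_of_le h0 (le_max_right _ _)))
  have h1 : ∀ r : ℝ, Continuous fun p : ℝ × ℝ => (max p.1 δ) ^ r := fun r =>
    hT.rpow_const (fun p => Or.inl (ne_of_gt (lt_of_lt_of_le h0 (le_max_right _ _))))
  have h2 : ∀ r : ℝ, Continuous fun p : ℝ × ℝ => (max p.2 δ) ^ r := fun r =>
    hS.rpow_const (fun p => Or.inl (ne_of_gt (lt_of_lt_of_le h0 (le_max_right _ _))))
  exact ((h1 _).mul (h2 _)).min ((h1 _).mul (h2 _))

theorem double_integral_log_upper (δ : ℝ) (h0 : 0 < δ) (h1 : δ < 1/2) :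
    (∫ t in δ..(1/2 : ℝ), ∫ s in δ..(1/2 : ℝ),
        min (1/t) (1/s) * (t * s) ^ (-(1/2) : ℝ)) ≤ 4 * Real.log (1/δ) := by
  set H : ℝ → ℝ → ℝ := fun t s =>
      min ((max t δ) ^ (-(3/2) : ℝ) * (max s δ) ^ (-(1/2) : ℝ))
          ((max t δ) ^ (-(1/2) : ℝ) * (max s δ) ^ (-(3/2) : ℝ)) with hH
  have hle : δ ≤ 1/2 := h1.le
  have huIcc : Set.uIcc δ (1/2 : ℝ) = Set.Icc δ (1/2 : ℝ) := Set.uIcc_of_le hle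
  -- pointwise equality on the square
  have hEq : ∀ t ∈ Set.Icc δ (1/2 : ℝ), ∀ s ∈ Set.Icc δ (1/2 : ℝ),
      min (1/t) (1/s) * (t * s) ^ (-(1/2) : ℝ) = H t s := by
    intro t ht s hs
    have htp : 0 < t := lt_of_lt_of_le h0 ht.1
    have hsp : 0 < s := lt_of_lt_of_le h0 hs.1
    have hmt : max t δ = t := max_eq_left ht.1
    have hms : max s δ = s := max_eq_left hs.1
    have hts : (t * s) ^ (-(1/2) : ℝ) = t ^ (-(1/2) : ℝ) * s ^ (-(1/2) : ℝ) :=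
      Real.mul_rpow htp.le hsp.le ▸ rfl
    have hpos : (0:ℝ) ≤ t ^ (-(1/2) : ℝ) * s ^ (-(1/2) : ℝ) :=
      mul_nonneg (Real.rpow_nonneg htp.le _) (Real.rpow_nonneg hsp.le _)
    rw [hH]; simp only [hmt, hms, hts]
    rw [min_mul_of_nonneg _ _ hpos]
    congr 1
    · rw [one_div, ← Real.rpow_neg_one t, ← mul_assoc, ← Real.rpow_add htp]
      norm_num
    · rw [one_div, ← Real.rpow_neg_one s, mul_comm (s ^ (-1:ℝ)),
        mul_assoc, ← Real.rpow_add hsp]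
      norm_num
  -- inner bound
  have hHcont := H_cont δ h0
  have hinner : ∀ t ∈ Set.Icc δ (1/2 : ℝ), (∫ s in δ..(1/2 : ℝ), H t s) ≤ 4 / t := by
    intro t ht
    have htp : 0 < t := lt_of_lt_of_le h0 ht.1
    have hiH : ∀ a b : ℝ, IntervalIntegrable (H t) volume a b :=
      fun a b => ((hHcont.comp (Continuous.prodMk_right t)).intervalIntegrable a b)
    have hsplit : (∫ s in δ..(1/2 : ℝ), H t s)
        = (∫ s in δ..t, H t s) + ∫ s in t..(1/2 : ℝ), H t s :=
      (intervalIntegral.integral_add_adjacent_intervals (hiH δ t) (hiH t (1/2))).symm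
    have hmt : max t δ = t := max_eq_left ht.1
    -- first piece
    have hI1 : (∫ s in δ..t, H t s) ≤ ∫ s in δ..t, t ^ (-(3/2) : ℝ) * s ^ (-(1/2) : ℝ) := by
      apply intervalIntegral.integral_mono_on ht.1 (hiH δ t)
      · exact (intervalIntegral.intervalIntegrable_rpow' (by norm_num)).const_mul _
      · intro s hs
        have hms : max s δ = s := max_eq_left hs.1
        calc H t s ≤ (max t δ) ^ (-(3/2) : ℝ) * (max s δ) ^ (-(1/2) : ℝ) := min_le_left _ _
          _ = t ^ (-(3/2) : ℝ) * s ^ (-(1/2) : ℝ) := by rw [hmt, hms]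
    have hc1 : (∫ s in δ..t, t ^ (-(3/2) : ℝ) * s ^ (-(1/2) : ℝ)) ≤ 2 / t := by
      rw [intervalIntegral.integral_const_mul, integral_rpow (Or.inl (by norm_num))]
      have : t ^ (-(1/2) + 1 : ℝ) - δ ^ (-(1/2) + 1 : ℝ) ≤ t ^ ((1:ℝ)/2) := by
        have : δ ^ (-(1/2) + 1 : ℝ) ≥ 0 := Real.rpow_nonneg h0.le _
        norm_num; linarith
      calc t ^ (-(3/2) : ℝ) * ((t ^ (-(1/2) + 1 : ℝ) - δ ^ (-(1/2) + 1 : ℝ)) / (-(1/2) + 1))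
          ≤ t ^ (-(3/2) : ℝ) * (t ^ ((1:ℝ)/2) / (-(1/2) + 1)) := by
            apply mul_le_mul_of_nonneg_left _ (Real.rpow_nonneg htp.le _)
            apply div_le_div_of_nonneg_right this (by norm_num) |>.trans_eq rfl
        _ = 2 * (t ^ (-(3/2) : ℝ) * t ^ ((1:ℝ)/2)) := by ring
        _ = 2 / t := by
            rw [← Real.rpow_add htp]
            norm_num
            rw [Real.rpow_neg_one t, div_eq_mul_inv]
    -- second piece
    have hI2 : (∫ s in t..(1/2 : ℝ), H t s)
        ≤ ∫ s in t..(1/2 : ℝ), t ^ (-(1/2) : ℝ) * s ^ (-(3/2) : ℝ) := by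
      apply intervalIntegral.integral_mono_on ht.2 (hiH t (1/2))
      · apply IntervalIntegrable.const_mul
        apply intervalIntegral.intervalIntegrable_rpow (Or.inr ?_)
        rw [Set.uIcc_of_le ht.2]
        intro h; exact absurd h.1 (not_le.mpr htp)
      · intro s hs
        have hsp : 0 < s := lt_of_lt_of_le htp hs.1
        have hms : max s δ = s := max_eq_left (le_trans ht.1 hs.1)
        calc H t s ≤ (max t δ) ^ (-(1/2) : ℝ) * (max s δ) ^ (-(3/2) : ℝ) := min_le_right _ _
          _ = t ^ (-(1/2) : ℝ) * s ^ (-(3/2) : ℝ) := by rw [hmt, hms]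
    have hc2 : (∫ s in t..(1/2 : ℝ), t ^ (-(1/2) : ℝ) * s ^ (-(3/2) : ℝ)) ≤ 2 / t := by
      rw [intervalIntegral.integral_const_mul, integral_rpow (Or.inr ⟨by norm_num, ?_⟩)]
      · have h2pos : (0:ℝ) < (1/2 : ℝ) ^ (-(3/2) + 1 : ℝ) - t ^ (-(3/2) + 1 : ℝ) → True := fun _ => trivial
        have hhalf : ((1:ℝ)/2) ^ (-(3/2) + 1 : ℝ) ≥ 0 := Real.rpow_nonneg (by norm_num) _
        have key : ((1/2:ℝ) ^ (-(3/2) + 1 : ℝ) - t ^ (-(3/2) + 1 : ℝ)) / (-(3/2) + 1)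
            ≤ 2 * t ^ (-(1/2) : ℝ) := by
          rw [div_le_iff_of_neg (by norm_num : (-(3/2:ℝ) + 1) < 0)]
          have : t ^ (-(3/2) + 1 : ℝ) = t ^ (-(1/2) : ℝ) := by norm_num
          rw [this]
          nlinarith [Real.rpow_nonneg htp.le (-(1/2) : ℝ)]
        calc t ^ (-(1/2) : ℝ) * (((1/2:ℝ) ^ (-(3/2) + 1 : ℝ) - t ^ (-(3/2) + 1 : ℝ)) / (-(3/2) + 1))
            ≤ t ^ (-(1/2) : ℝ) * (2 * t ^ (-(1/2) : ℝ)) :=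
              mul_le_mul_of_nonneg_left key (Real.rpow_nonneg htp.le _)
          _ = 2 * (t ^ (-(1/2) : ℝ) * t ^ (-(1/2) : ℝ)) := by ring
          _ = 2 / t := by
              rw [← Real.rpow_add htp]
              norm_num
              rw [Real.rpow_neg_one t, div_eq_mul_inv]
      · rw [Set.uIcc_of_le ht.2]
        intro h; exact absurd h.1 (not_le.mpr htp)
    calc (∫ s in δ..(1/2 : ℝ), H t s) = _ := hsplit
      _ ≤ 2 / t + 2 / t := add_le_add (hI1.trans hc1) (hI2.trans hc2)
      _ = 4 / t := by ring
  -- rewrite outer integrand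
  have houter : (∫ t in δ..(1/2 : ℝ), ∫ s in δ..(1/2 : ℝ),
      min (1/t) (1/s) * (t * s) ^ (-(1/2) : ℝ)) = ∫ t in δ..(1/2 : ℝ), ∫ s in δ..(1/2 : ℝ), H t s := by
    apply intervalIntegral.integral_congr
    intro t ht
    rw [huIcc] at ht
    apply intervalIntegral.integral_congr
    intro s hs
    rw [huIcc] at hs
    exact hEq t ht s hs
  rw [houter]
  have hcontinner : Continuous fun t => ∫ s in δ..(1/2 : ℝ), H t s :=
    intervalIntegral.continuous_parametric_intervalIntegral_of_continuous' (H_cont δ h0) _ _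
  have h4t : IntervalIntegrable (fun t : ℝ => 4 / t) volume δ (1/2) := by
    have hc : ContinuousOn (fun t : ℝ => 4 / t) (Set.uIcc δ (1/2 : ℝ)) := by
      apply ContinuousOn.div continuousOn_const continuousOn_id
      intro x hx; rw [huIcc] at hx; exact ne_of_gt (lt_of_lt_of_le h0 hx.1)
    exact hc.intervalIntegrable
  have hmono : (∫ t in δ..(1/2 : ℝ), ∫ s in δ..(1/2 : ℝ), H t s)
      ≤ ∫ t in δ..(1/2 : ℝ), 4 / t :=
    intervalIntegral.integral_mono_on hle (hcontinner.intervalIntegrable δ (1/2)) h4t hinner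
  refine hmono.trans ?_
  have : (∫ t in δ..(1/2 : ℝ), 4 / t) = 4 * ∫ t in δ..(1/2 : ℝ), 1 / t := by
    rw [← intervalIntegral.integral_const_mul]
    congr 1; ext t; ring
  rw [this, integral_one_div (by rw [huIcc]; intro h; exact absurd h.1 (not_le.mpr h0))]
  have hlog : Real.log ((1/2) / δ) ≤ Real.log (1/δ) := by
    apply Real.log_le_log (by positivity)
    rw [div_div]
    exact one_div_le_one_div_of_le h0 (by linarith)
  linarith [hlog]
end

section
/- For every δ with 0 < δ < 1/2, ∫_δ^{1/2} ∫_δ^{1/2} min(1/t², 1/s²) · (ts)^{1/2} ds dt ≤ 2/3. -/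
/-!
Since `min (1/t²) (1/s²) = 1/(max t s)²`, the integrand is `t^(-3/2) s^(1/2)` for `s ≤ t` and
`t^(1/2) s^(-3/2)` for `t ≤ s`. Integrating in `s` over `[a, b]` gives the closed form
`8/3 - 2/3 a^(3/2) t^(-3/2) - 2 b^(-1/2) t^(1/2)`, and integrating that in `t` gives
`4/3 b - 4 a + 8/3 a^(3/2) b^(-1/2)`, which is at most `4/3 (b - a)` because
`b^(-1/2) ≤ a^(-1/2)`.
-/

open MeasureTheory intervalIntegral Set

noncomputable def mixedKernel (t s : ℝ) : ℝ := min (1/t^2) (1/s^2) * (t * s) ^ ((1/2) : ℝ)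

lemma mixedKernel_comm (t s : ℝ) : mixedKernel t s = mixedKernel s t := by
  rw [mixedKernel, mixedKernel, min_comm, mul_comm t s]

lemma mixedKernel_of_le {t s : ℝ} (hs : 0 < s) (hst : s ≤ t) :
    mixedKernel t s = t ^ (-(3/2) : ℝ) * s ^ ((1/2) : ℝ) := by
  have ht : 0 < t := hs.trans_le hst
  have hmin : min (1/t^2) (1/s^2) = t ^ (-2 : ℝ) := by
    rw [min_eq_left (one_div_le_one_div_of_le (by positivity) (by gcongr)),
      Real.rpow_neg ht.le, Real.rpow_two, one_div]
  rw [mixedKernel, hmin, Real.mul_rpow ht.le hs.le, ← mul_assoc, ← Real.rpow_add ht]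
  norm_num

lemma mixedKernel_of_ge {t s : ℝ} (ht : 0 < t) (hts : t ≤ s) :
    mixedKernel t s = t ^ ((1/2) : ℝ) * s ^ (-(3/2) : ℝ) := by
  rw [mixedKernel_comm, mixedKernel_of_le ht hts, mul_comm]

lemma continuousOn_mixedKernel (t : ℝ) : ContinuousOn (mixedKernel t) (Ioi 0) := by
  refine ContinuousOn.mul (ContinuousOn.inf continuousOn_const ?_) ?_
  · exact continuousOn_const.div (by fun_prop) fun _ hs => pow_ne_zero 2 (ne_of_gt hs)
  · exact (Continuous.rpow_const (by fun_prop) fun _ => Or.inr (by norm_num)).continuousOn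

lemma intervalIntegrable_mixedKernel {a b : ℝ} (t : ℝ) (ha : 0 < a) (hab : a ≤ b) :
    IntervalIntegrable (mixedKernel t) volume a b :=
  ((continuousOn_mixedKernel t).mono fun _ hs => ha.trans_le hs.1).intervalIntegrable_of_Icc hab

lemma rpow_mul_rpow_neg {x : ℝ} (hx : 0 < x) (y : ℝ) : x ^ y * x ^ (-y) = 1 := by
  rw [← Real.rpow_add hx, add_neg_cancel, Real.rpow_zero]

lemma rpow_three_halves_mul_rpow_neg_half {x : ℝ} (hx : 0 < x) :
    x ^ ((3/2) : ℝ) * x ^ (-(1/2) : ℝ) = x := by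
  rw [← Real.rpow_add hx]; norm_num

lemma integral_mixedKernel {a b t : ℝ} (ha : 0 < a) (hat : a ≤ t) (htb : t ≤ b) :
    ∫ s in a..b, mixedKernel t s =
      8/3 - 2/3 * a ^ ((3/2) : ℝ) * t ^ (-(3/2) : ℝ)
        - 2 * b ^ (-(1/2) : ℝ) * t ^ ((1/2) : ℝ) := by
  have ht : 0 < t := ha.trans_le hat
  have hlow :
      ∫ s in a..t, mixedKernel t s = ∫ s in a..t, t ^ (-(3/2) : ℝ) * s ^ ((1/2) : ℝ) :=
    integral_congr fun s hs => by
      rw [uIcc_of_le hat] at hs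
      exact mixedKernel_of_le (ha.trans_le hs.1) hs.2
  have hhigh :
      ∫ s in t..b, mixedKernel t s = ∫ s in t..b, t ^ ((1/2) : ℝ) * s ^ (-(3/2) : ℝ) :=
    integral_congr fun s hs => by
      rw [uIcc_of_le htb] at hs
      exact mixedKernel_of_ge ht hs.1
  have h0 : (0 : ℝ) ∉ uIcc t b := notMem_uIcc_of_lt ht (ht.trans_le htb)
  rw [← integral_add_adjacent_intervals (intervalIntegrable_mixedKernel t ha hat)
      (intervalIntegrable_mixedKernel t ht htb), hlow, hhigh,
    intervalIntegral.integral_const_mul, intervalIntegral.integral_const_mul,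
    integral_rpow (by norm_num), integral_rpow (Or.inr ⟨by norm_num, h0⟩)]
  have h₁ := rpow_mul_rpow_neg ht (3/2)
  have h₂ := rpow_mul_rpow_neg ht (1/2)
  rw [show (1/2 : ℝ) + 1 = 3/2 by norm_num, show -(3/2 : ℝ) + 1 = -(1/2) by norm_num]
  linear_combination (2/3 : ℝ) * h₁ + 2 * h₂

lemma integral_integral_mixedKernel {a b : ℝ} (ha : 0 < a) (hab : a ≤ b) :
    ∫ t in a..b, ∫ s in a..b, mixedKernel t s =
      4/3 * b - 4 * a + 8/3 * a ^ ((3/2) : ℝ) * b ^ (-(1/2) : ℝ) := by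
  have h0 : (0 : ℝ) ∉ uIcc a b := notMem_uIcc_of_lt ha (ha.trans_le hab)
  have hneg : IntervalIntegrable (fun t : ℝ => t ^ (-(3/2) : ℝ)) volume a b :=
    intervalIntegrable_rpow (Or.inr h0)
  have hpos : IntervalIntegrable (fun t : ℝ => t ^ ((1/2) : ℝ)) volume a b :=
    intervalIntegrable_rpow (Or.inl (by norm_num))
  rw [integral_congr fun t ht =>
      integral_mixedKernel ha (uIcc_of_le hab ▸ ht).1 (uIcc_of_le hab ▸ ht).2,
    integral_sub (intervalIntegrable_const.sub (hneg.const_mul _)) (hpos.const_mul _),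
    integral_sub intervalIntegrable_const (hneg.const_mul _), intervalIntegral.integral_const,
    intervalIntegral.integral_const_mul, intervalIntegral.integral_const_mul,
    integral_rpow (Or.inr ⟨by norm_num, h0⟩), integral_rpow (by norm_num)]
  have h₁ := rpow_three_halves_mul_rpow_neg_half ha
  have h₂ := rpow_three_halves_mul_rpow_neg_half (ha.trans_le hab)
  rw [show (1/2 : ℝ) + 1 = 3/2 by norm_num, show -(3/2 : ℝ) + 1 = -(1/2) by norm_num]
  linear_combination (-4/3 : ℝ) * h₁ + (-4/3 : ℝ) * h₂

lemma integral_integral_mixedKernel_le {a b : ℝ} (ha : 0 < a) (hab : a ≤ b) :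
    ∫ t in a..b, ∫ s in a..b, mixedKernel t s ≤ 4/3 * (b - a) := by
  have hmono : b ^ (-(1/2) : ℝ) ≤ a ^ (-(1/2) : ℝ) :=
    Real.rpow_le_rpow_of_nonpos ha hab (by norm_num)
  rw [integral_integral_mixedKernel ha hab]
  linarith [mul_le_mul_of_nonneg_left hmono (Real.rpow_nonneg ha.le (3/2 : ℝ)),
    rpow_three_halves_mul_rpow_neg_half ha]

theorem double_integral_mixed_upper (δ : ℝ) (h0 : 0 < δ) (h1 : δ < 1/2) :
    (∫ t in δ..(1/2 : ℝ), ∫ s in δ..(1/2 : ℝ),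
        min (1/t^2) (1/s^2) * (t * s) ^ ((1/2) : ℝ)) ≤ 2/3 := by
  calc _ ≤ 4/3 * (1/2 - δ) := integral_integral_mixedKernel_le h0 h1.le
    _ ≤ 2/3 := by linarith
end

section
/- For every δ with 0 < δ < 1/2, ∫_δ^{1/2} ∫_δ^{1/2} min(1/t², 1/s²) · (ts)^{-1/2} ds dt ≤ 4/δ. -/
open MeasureTheory Set

private lemma int_rpow_bound {δ : ℝ} (h0 : 0 < δ) (h1 : δ < 1/2) :
    ∫ x in δ..(1/2 : ℝ), x ^ (-(3/2) : ℝ) ≤ 2 * δ ^ (-(1/2) : ℝ) := by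
  rw [integral_rpow (Or.inr ⟨by norm_num, by
      rw [Set.uIcc_of_le h1.le]; intro h; exact absurd (h.1) (by linarith)⟩)]
  have h2 : (0:ℝ) < ((1:ℝ)/2) ^ (-(1/2) : ℝ) := Real.rpow_pos_of_pos (by norm_num) _
  have : ((1:ℝ)/2) ^ ((-(3/2):ℝ) + 1) - δ ^ ((-(3/2):ℝ) + 1) =
      ((1:ℝ)/2) ^ (-(1/2):ℝ) - δ ^ (-(1/2):ℝ) := by norm_num
  rw [this]
  have hδ : (0:ℝ) ≤ δ ^ (-(1/2) : ℝ) := (Real.rpow_pos_of_pos h0 _).le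
  rw [div_le_iff_of_neg (by norm_num : (-(3/2):ℝ) + 1 < 0)]
  nlinarith

private lemma pointwise_bound {t s : ℝ} (ht : 0 < t) (hs : 0 < s) :
    min (1/t^2) (1/s^2) * (t * s) ^ (-(1/2) : ℝ) ≤ t ^ (-(3/2):ℝ) * s ^ (-(3/2):ℝ) := by
  have hts : 0 < t * s := mul_pos ht hs
  have hmin : min (1/t^2) (1/s^2) ≤ (t * s)⁻¹ := by
    rcases le_total t s with h | h
    · refine le_trans (min_le_right _ _) ?_
      rw [one_div]
      gcongr
      nlinarith
    · refine le_trans (min_le_left _ _) ?_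
      rw [one_div]
      gcongr
      nlinarith
  have h2 : (0:ℝ) ≤ (t * s) ^ (-(1/2) : ℝ) := (Real.rpow_pos_of_pos hts _).le
  calc min (1/t^2) (1/s^2) * (t * s) ^ (-(1/2) : ℝ)
      ≤ (t * s)⁻¹ * (t * s) ^ (-(1/2) : ℝ) := by gcongr
    _ = (t * s) ^ (-(3/2) : ℝ) := by
        rw [← Real.rpow_neg_one, ← Real.rpow_add hts]; norm_num
    _ = t ^ (-(3/2):ℝ) * s ^ (-(3/2):ℝ) := Real.mul_rpow ht.le hs.le

theorem double_integral_delta_upper (δ : ℝ) (h0 : 0 < δ) (h1 : δ < 1/2) :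
    (∫ t in δ..(1/2 : ℝ), ∫ s in δ..(1/2 : ℝ),
        min (1/t^2) (1/s^2) * (t * s) ^ (-(1/2) : ℝ)) ≤ 4/δ := by
  have hδle : δ ≤ 1/2 := h1.le
  have hδrpos : (0:ℝ) < δ ^ (-(1/2) : ℝ) := Real.rpow_pos_of_pos h0 _
  set G : ℝ → ℝ := fun t => (2 * δ ^ (-(1/2) : ℝ)) * t ^ (-(3/2):ℝ) with hG
  -- continuity facts
  have hcontG : ContinuousOn G (Icc δ (1/2)) := by
    apply ContinuousOn.mul continuousOn_const
    exact fun x hx => (Real.continuousAt_rpow_const x _ (Or.inl (by linarith [hx.1]))).continuousWithinAt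
  -- inner bound for each t in Ioc δ (1/2)
  have inner_bound : ∀ t ∈ Ioc δ (1/2 : ℝ),
      (∫ s in δ..(1/2 : ℝ), min (1/t^2) (1/s^2) * (t * s) ^ (-(1/2) : ℝ)) ≤ G t := by
    intro t ht
    have htpos : 0 < t := lt_trans h0 ht.1
    have huIcc : uIcc δ (1/2 : ℝ) = Icc δ (1/2 : ℝ) := uIcc_of_le hδle
    have hif : IntervalIntegrable
        (fun s => min (1/t^2) (1/s^2) * (t * s) ^ (-(1/2) : ℝ)) volume δ (1/2) := by
      apply ContinuousOn.intervalIntegrable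
      rw [huIcc]
      apply ContinuousOn.mul
      · exact ContinuousOn.inf continuousOn_const
          (ContinuousOn.div continuousOn_const ((continuous_pow 2).continuousOn)
            (fun s hs => pow_ne_zero 2 (by linarith [hs.1])))
      · apply ContinuousOn.rpow_const (continuous_mul_left t).continuousOn
        intro s hs
        exact Or.inl (ne_of_gt (mul_pos htpos (by linarith [hs.1])))
    have hig : IntervalIntegrable
        (fun s => t ^ (-(3/2):ℝ) * s ^ (-(3/2):ℝ)) volume δ (1/2) := by
      apply ContinuousOn.intervalIntegrable
      rw [huIcc]
      apply ContinuousOn.mul continuousOn_const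
      exact fun x hx => (Real.continuousAt_rpow_const x _ (Or.inl (by linarith [hx.1]))).continuousWithinAt
    calc (∫ s in δ..(1/2 : ℝ), min (1/t^2) (1/s^2) * (t * s) ^ (-(1/2) : ℝ))
        ≤ ∫ s in δ..(1/2 : ℝ), t ^ (-(3/2):ℝ) * s ^ (-(3/2):ℝ) :=
          intervalIntegral.integral_mono_on hδle hif hig
            (fun s hs => pointwise_bound htpos (lt_of_lt_of_le h0 hs.1))
      _ = t ^ (-(3/2):ℝ) * ∫ s in δ..(1/2 : ℝ), s ^ (-(3/2):ℝ) :=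
          intervalIntegral.integral_const_mul _ _
      _ ≤ t ^ (-(3/2):ℝ) * (2 * δ ^ (-(1/2) : ℝ)) :=
          mul_le_mul_of_nonneg_left (int_rpow_bound h0 h1) (Real.rpow_pos_of_pos htpos _).le
      _ = G t := by ring
  -- nonnegativity of inner integral
  have inner_nonneg : ∀ t ∈ Ioc δ (1/2 : ℝ),
      0 ≤ (∫ s in δ..(1/2 : ℝ), min (1/t^2) (1/s^2) * (t * s) ^ (-(1/2) : ℝ)) := by
    intro t ht
    have htpos : 0 < t := lt_trans h0 ht.1
    apply intervalIntegral.integral_nonneg hδle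
    intro s hs
    have hspos : 0 < s := lt_of_lt_of_le h0 hs.1
    apply mul_nonneg
    · exact le_min (by positivity) (by positivity)
    · exact (Real.rpow_pos_of_pos (mul_pos htpos hspos) _).le
  -- outer step
  rw [intervalIntegral.integral_of_le hδle]
  have hGint : IntegrableOn G (Ioc δ (1/2 : ℝ)) volume :=
    (hcontG.integrableOn_Icc).mono_set Ioc_subset_Icc_self
  have step : (∫ t in Ioc δ (1/2 : ℝ), ∫ s in δ..(1/2 : ℝ),
      min (1/t^2) (1/s^2) * (t * s) ^ (-(1/2) : ℝ)) ≤ ∫ t in Ioc δ (1/2 : ℝ), G t := by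
    apply integral_mono_of_nonneg
    · exact (ae_restrict_mem measurableSet_Ioc).mono (fun t ht => inner_nonneg t ht)
    · exact hGint
    · exact (ae_restrict_mem measurableSet_Ioc).mono (fun t ht => inner_bound t ht)
  refine step.trans ?_
  rw [← intervalIntegral.integral_of_le hδle]
  calc (∫ t in δ..(1/2:ℝ), G t)
      = (2 * δ ^ (-(1/2) : ℝ)) * ∫ t in δ..(1/2:ℝ), t ^ (-(3/2):ℝ) :=
        intervalIntegral.integral_const_mul _ _
    _ ≤ (2 * δ ^ (-(1/2) : ℝ)) * (2 * δ ^ (-(1/2) : ℝ)) :=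
        mul_le_mul_of_nonneg_left (int_rpow_bound h0 h1) (by positivity)
    _ = 4 * (δ ^ (-(1/2) : ℝ) * δ ^ (-(1/2) : ℝ)) := by ring
    _ = 4 / δ := by
        rw [← Real.rpow_add h0]
        norm_num [Real.rpow_neg_one, div_eq_mul_inv]
end

section
/- For every δ with 0 < δ < 1/2, ∫_δ^{1/2} ∫_{1/2}^{1-δ} 1/(ts + (1-t)(1-s)) dμ(t) dμ(s) ≤ (16/π²)·ln(1/δ), where dμ(t) = dt/(π√(t(1-t))). -/
open MeasureTheory Real Set

/-!
On the rectangle put `u = 1 - s`, so `t, u ∈ [δ, 1/2]`. There the kernel's denominator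
`t(1-u) + (1-t)u` is at least `(t + u)/2`, and the arcsine densities at `t` and `s` are at most
`√2/(π√t)` and `√2/(π√u)`, so the integrand is at most `(4/π²)/(√t √u (t + u))`. Since
`(2/√t) arctan √(u/t)` is an antiderivative in `u` and `arctan < π/2`, the `u`-integral is at most
`π/√t`, leaving `∫_δ^{1/2} 4/(π t) dt = (4/π) log(1/(2δ)) ≤ (16/π²) log(1/δ)` because `π ≤ 4`.
-/

noncomputable def arcsineDensity (t : ℝ) : ℝ := 1 / (π * √(t * (1 - t)))

lemma arcsineDensity_nonneg (t : ℝ) : 0 ≤ arcsineDensity t := by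
  unfold arcsineDensity; positivity

lemma arcsineDensity_one_sub (t : ℝ) : arcsineDensity (1 - t) = arcsineDensity t := by
  rw [arcsineDensity, arcsineDensity, sub_sub_cancel, mul_comm (1 - t)]

lemma arcsineDensity_le {t : ℝ} (ht0 : 0 < t) (ht : t ≤ 1 / 2) :
    arcsineDensity t ≤ √2 / (π * √t) := by
  have hsqrt : √t / √2 ≤ √(t * (1 - t)) := by
    rw [← sqrt_div ht0.le]
    exact sqrt_le_sqrt (by nlinarith)
  calc arcsineDensity t ≤ 1 / (π * (√t / √2)) := by
        unfold arcsineDensity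
        gcongr
    _ = √2 / (π * √t) := by field_simp

/-- No integrability of `f` is needed: if `f` is not integrable, its integral is `0`. -/
lemma intervalIntegral.integral_mono_on_of_nonneg {μ : Measure ℝ} {f g : ℝ → ℝ} {a b : ℝ}
    (hab : a ≤ b) (hf : ∀ x ∈ Icc a b, 0 ≤ f x) (hg : IntervalIntegrable g μ a b)
    (h : ∀ x ∈ Icc a b, f x ≤ g x) : ∫ x in a..b, f x ∂μ ≤ ∫ x in a..b, g x ∂μ := by
  rw [intervalIntegral.integral_of_le hab, intervalIntegral.integral_of_le hab]
  refine integral_mono_of_nonneg ?_ hg.1 ?_ <;>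
    refine ae_restrict_of_forall_mem measurableSet_Ioc fun x hx => ?_
  exacts [hf x (Ioc_subset_Icc_self hx), h x (Ioc_subset_Icc_self hx)]

lemma hasDerivAt_arctan_sqrt_div {t u : ℝ} (ht : 0 < t) (hu : 0 < u) :
    HasDerivAt (fun u => 2 / √t * arctan (√u / √t)) (1 / (√u * (t + u))) u := by
  have h := (((hasDerivAt_sqrt hu.ne').div_const √t).arctan).const_mul (2 / √t)
  refine h.congr_deriv ?_
  have : 0 < √t := sqrt_pos.2 ht
  rw [div_pow, sq_sqrt hu.le, sq_sqrt ht.le]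
  field_simp
  rw [sq_sqrt ht.le]

lemma intervalIntegrable_one_div_sqrt_mul_add {t a b : ℝ} (ht : 0 ≤ t) (ha : 0 < a)
    (hab : a ≤ b) : IntervalIntegrable (fun u => 1 / (√u * (t + u))) volume a b := by
  refine intervalIntegral.intervalIntegrable_one_div (fun u hu => ?_) (by fun_prop)
  have : 0 < u := ha.trans_le (uIcc_of_le hab ▸ hu).1
  positivity

lemma integral_one_div_sqrt_mul_add_le {t a b : ℝ} (ht : 0 < t) (ha : 0 < a) (hab : a ≤ b) :
    ∫ u in a..b, 1 / (√u * (t + u)) ≤ π / √t := by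
  rw [intervalIntegral.integral_eq_sub_of_hasDerivAt (fun u hu => hasDerivAt_arctan_sqrt_div ht
    (ha.trans_le (uIcc_of_le hab ▸ hu).1)) (intervalIntegrable_one_div_sqrt_mul_add ht.le ha hab)]
  have hb := arctan_lt_pi_div_two (√b / √t)
  have ha := arctan_nonneg.2 (by positivity : 0 ≤ √a / √t)
  have : 0 < √t := sqrt_pos.2 ht
  calc 2 / √t * arctan (√b / √t) - 2 / √t * arctan (√a / √t) ≤ 2 / √t * (π / 2) := by
        rw [← mul_sub]; gcongr; linarith
    _ = π / √t := by ring

lemma energy_integrand_nonneg {t s : ℝ} (ht0 : 0 ≤ t) (ht1 : t ≤ 1) (hs0 : 0 ≤ s) (hs1 : s ≤ 1) :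
    0 ≤ 1 / (t * s + (1 - t) * (1 - s)) * arcsineDensity t * arcsineDensity s := by
  have : 0 ≤ t * s + (1 - t) * (1 - s) :=
    add_nonneg (mul_nonneg ht0 hs0) (mul_nonneg (by linarith) (by linarith))
  have := arcsineDensity_nonneg t
  have := arcsineDensity_nonneg s
  positivity

lemma energy_integrand_le {t s : ℝ} (ht0 : 0 < t) (ht : t ≤ 1 / 2) (hs : 1 / 2 ≤ s) (hs1 : s < 1) :
    1 / (t * s + (1 - t) * (1 - s)) * arcsineDensity t * arcsineDensity s ≤
      4 / π ^ 2 / √t * (1 / (√(1 - s) * (t + (1 - s)))) := by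
  have hker : 1 / (t * s + (1 - t) * (1 - s)) ≤ 2 / (t + (1 - s)) := by
    rw [div_le_div_iff₀ (by nlinarith) (by linarith)]
    nlinarith
  have hρs := arcsineDensity_le (t := 1 - s) (by linarith) (by linarith)
  rw [arcsineDensity_one_sub] at hρs
  have : 0 < √(1 - s) := sqrt_pos.2 (by linarith)
  calc 1 / (t * s + (1 - t) * (1 - s)) * arcsineDensity t * arcsineDensity s
      ≤ 2 / (t + (1 - s)) * (√2 / (π * √t)) * (√2 / (π * √(1 - s))) := by
        gcongr
        exacts [arcsineDensity_nonneg s, arcsineDensity_nonneg t, arcsineDensity_le ht0 ht]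
    _ = 4 / π ^ 2 / √t * (1 / (√(1 - s) * (t + (1 - s)))) := by
        field_simp
        rw [sq_sqrt zero_le_two]
        ring

lemma integral_energy_integrand_le {δ t : ℝ} (hδ0 : 0 < δ) (hδ : δ ≤ 1 / 2) (ht0 : 0 < t)
    (ht : t ≤ 1 / 2) :
    ∫ s in (1 / 2 : ℝ)..(1 - δ), 1 / (t * s + (1 - t) * (1 - s)) * arcsineDensity t *
      arcsineDensity s ≤ 4 / π * t⁻¹ := by
  set h : ℝ → ℝ := fun u => 1 / (√u * (t + u))
  have hint : IntervalIntegrable (fun s => h (1 - s)) volume (1 / 2) (1 - δ) := by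
    convert ((intervalIntegrable_one_div_sqrt_mul_add ht0.le hδ0 hδ).comp_sub_left 1).symm using 1
    norm_num
  have : 0 < √t := sqrt_pos.2 ht0
  calc ∫ s in (1 / 2 : ℝ)..(1 - δ), 1 / (t * s + (1 - t) * (1 - s)) * arcsineDensity t *
        arcsineDensity s
      ≤ ∫ s in (1 / 2 : ℝ)..(1 - δ), 4 / π ^ 2 / √t * h (1 - s) := by
        refine intervalIntegral.integral_mono_on_of_nonneg (by linarith)
          (fun s hs => energy_integrand_nonneg ht0.le (by linarith) (by linarith [hs.1])
            (by linarith [hs.2]))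
          (hint.const_mul _) fun s hs => energy_integrand_le ht0 ht hs.1 (by linarith [hs.2])
    _ = 4 / π ^ 2 / √t * ∫ u in δ..(1 / 2), h u := by
        rw [intervalIntegral.integral_const_mul, intervalIntegral.integral_comp_sub_left]
        norm_num
    _ ≤ 4 / π ^ 2 / √t * (π / √t) := by
        gcongr
        exact integral_one_div_sqrt_mul_add_le ht0 hδ0 hδ
    _ = 4 / π * t⁻¹ := by
        field_simp
        rw [sq_sqrt ht0.le]

theorem rectangle_energy_upper (δ : ℝ) (h0 : 0 < δ) (h1 : δ < 1/2) :
    (∫ t in δ..(1/2 : ℝ), ∫ s in (1/2 : ℝ)..(1 - δ),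
        (1 / (t * s + (1 - t) * (1 - s))) *
          (1 / (Real.pi * Real.sqrt (t * (1 - t)))) *
          (1 / (Real.pi * Real.sqrt (s * (1 - s))))) ≤
      (16 / Real.pi ^ 2) * Real.log (1/δ) := by
  calc (∫ t in δ..(1/2 : ℝ), ∫ s in (1/2 : ℝ)..(1 - δ),
        1 / (t * s + (1 - t) * (1 - s)) * arcsineDensity t * arcsineDensity s)
      ≤ ∫ t in δ..(1/2 : ℝ), 4 / π * t⁻¹ := by
        refine intervalIntegral.integral_mono_on_of_nonneg h1.le (fun t ht => ?_) ?_ fun t ht => ?_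
        · exact intervalIntegral.integral_nonneg (by linarith) fun s hs =>
            energy_integrand_nonneg (by linarith [ht.1]) (by linarith [ht.2]) (by linarith [hs.1])
              (by linarith [hs.2])
        · exact (intervalIntegral.intervalIntegrable_inv (f := fun t => t)
            (fun t ht => ((uIcc_of_le h1.le ▸ ht).1.trans_lt' h0).ne') continuousOn_id).const_mul _
        · exact integral_energy_integrand_le h0 h1.le (h0.trans_le ht.1) ht.2
    _ = 4 / π * log (1 / 2 / δ) := by
        rw [intervalIntegral.integral_const_mul, integral_inv_of_pos h0 one_half_pos]
    _ ≤ 16 / π ^ 2 * log (1 / δ) := by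
        have hπ : 4 / π ≤ 16 / π ^ 2 := by
          rw [div_le_div_iff₀ pi_pos (by positivity)]
          nlinarith [pi_le_four, pi_pos]
        gcongr
        · exact log_nonneg (by rw [le_div_iff₀ h0]; linarith)
        · norm_num
end
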